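/- Let X be a separable globally hyperbolic poset with the interval topology. If (k_i) is a sequence of nonempty compact linearly ordered subsets of X converging in the Vietoris topology to a compact set k, then k is linearly ordered. -/
import Mathlib


/-- `x` is way below `y`. -/
def wayBelow {P : Type*} [Preorder P] (x y : P) : Prop :=
  ∀ S : Set P, S.Nonempty → DirectedOn (· ≤ ·) S → ∀ s : P, IsLUB S s → y ≤ s →
    ∃ z ∈ S, x ≤ z

/-- A poset is a dcpo if every nonempty directed subset has a supremum. -/
def IsDcpo (P : Type*) [Preorder P] : Prop :=
  ∀ S : Set P, S.Nonempty → DirectedOn (· ≤ ·) S → ∃ s : P, IsLUB S s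

/-- `B` is a (domain-theoretic) basis for `P`. -/
def IsDomainBasis {P : Type*} [Preorder P] (B : Set P) : Prop :=
  ∀ x : P, ∃ S : Set P, S ⊆ B ∧ S.Nonempty ∧ DirectedOn (· ≤ ·) S ∧
    (∀ a ∈ S, wayBelow a x) ∧ IsLUB S x

/-- A poset is continuous if it has a basis (equivalently, the whole poset is a basis). -/
def IsContinuousPoset (P : Type*) [Preorder P] : Prop :=
  IsDomainBasis (Set.univ : Set P)

/-- The Scott topology on a poset. -/
def scottTop (P : Type*) [Preorder P] : TopologicalSpace P where
  IsOpen U := (∀ x ∈ U, ∀ y, x ≤ y → y ∈ U) ∧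
    ∀ S : Set P, S.Nonempty → DirectedOn (· ≤ ·) S → ∀ s : P, IsLUB S s → s ∈ U →
      (S ∩ U).Nonempty
  isOpen_univ := ⟨fun _ _ _ _ => trivial,
    fun S hS _ _ _ _ => hS.imp fun x hx => ⟨hx, trivial⟩⟩
  isOpen_inter := by
    rintro U V ⟨hUup, hUin⟩ ⟨hVup, hVin⟩
    refine ⟨fun x hx y hxy => ⟨hUup x hx.1 y hxy, hVup x hx.2 y hxy⟩, ?_⟩
    rintro S hS hdir s hs ⟨hsU, hsV⟩
    obtain ⟨a, haS, haU⟩ := hUin S hS hdir s hs hsU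
    obtain ⟨b, hbS, hbV⟩ := hVin S hS hdir s hs hsV
    obtain ⟨c, hcS, hac, hbc⟩ := hdir a haS b hbS
    exact ⟨c, hcS, hUup a haU c hac, hVup b hbV c hbc⟩
  isOpen_sUnion := by
    intro C hC
    refine ⟨fun x hx y hxy => ?_, ?_⟩
    · obtain ⟨t, htC, hxt⟩ := hx
      exact ⟨t, htC, (hC t htC).1 x hxt y hxy⟩
    · rintro S hS hdir s hs ⟨t, htC, hst⟩
      obtain ⟨a, haS, hat⟩ := (hC t htC).2 S hS hdir s hs hst
      exact ⟨a, haS, t, htC, hat⟩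

/-- A continuous poset is bicontinuous if the way-below relation admits the dual
characterization via filtered infima and each `↟x` is filtered with infimum `x`. -/
def IsBicontinuous (P : Type*) [Preorder P] : Prop :=
  IsContinuousPoset P ∧
  (∀ x y : P, wayBelow x y ↔
    ∀ S : Set P, S.Nonempty → DirectedOn (· ≥ ·) S → ∀ i : P, IsGLB S i → i ≤ x →
      ∃ s ∈ S, s ≤ y) ∧
  (∀ x : P, {a | wayBelow x a}.Nonempty ∧ DirectedOn (· ≥ ·) {a | wayBelow x a} ∧
    IsGLB {a | wayBelow x a} x)

/-- The interval topology on a bicontinuous poset, with basic open sets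
`(a,b) = {x | a ≪ x ≪ b}`. -/
def intervalTop (P : Type*) [Preorder P] : TopologicalSpace P :=
  .generateFrom {s | ∃ a b : P, s = {x | wayBelow a x ∧ wayBelow x b}}

/-- A globally hyperbolic poset: bicontinuous, with all closed intervals compact
in the interval topology. -/
def IsGloballyHyperbolic (P : Type*) [PartialOrder P] : Prop :=
  IsBicontinuous P ∧ ∀ a b : P, a ≤ b → @IsCompact P (intervalTop P) (Set.Icc a b)

variable (X : Type*) [PartialOrder X]

/-- Nonempty subsets of `X` compact in the interval topology. -/
def NEC := {K : Set X // K.Nonempty ∧ @IsCompact X (intervalTop X) K}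

/-- The Vietoris topology on the nonempty compact subsets of `X` (with its
interval topology), with basic open sets
`σ(U₁,…,Uₙ) = {K | K ⊆ ⋃ Uᵢ and K ∩ Uᵢ ≠ ∅ for all i}`. -/
def vietoris : TopologicalSpace (NEC X) :=
  .generateFrom {s | ∃ (n : ℕ) (U : Fin n → Set X),
    (∀ i, @IsOpen X (intervalTop X) (U i)) ∧
    s = {K : NEC X | K.1 ⊆ ⋃ i, U i ∧ ∀ i, (K.1 ∩ U i).Nonempty}}

/-- `X` is separable as a continuous poset: it has a countable basis. -/
def SeparablePoset : Prop := ∃ B : Set X, B.Countable ∧ IsDomainBasis B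

lemma wayBelow_le {P : Type*} [Preorder P] {a u : P} (h : wayBelow a u) : a ≤ u := by
  obtain ⟨z, hz, haz⟩ := h {u} ⟨u, rfl⟩
    (fun p hp q hq => ⟨u, rfl, le_of_eq hp, le_of_eq hq⟩) u isLUB_singleton le_rfl
  exact hz ▸ haz

lemma sep_of_not_le {P : Type*} [PartialOrder P] (hbi : IsBicontinuous P) {x y : P}
    (hxy : ¬ x ≤ y) :
    ∃ U V : Set P, @IsOpen P (intervalTop P) U ∧ @IsOpen P (intervalTop P) V ∧
      x ∈ U ∧ y ∈ V ∧ ∀ u ∈ U, ∀ v ∈ V, ¬ u ≤ v := by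
  obtain ⟨hcont, -, hfilt⟩ := hbi
  obtain ⟨S, -, hSne, hSdir, hSwb, hSlub⟩ := hcont x
  have ha : ∃ a ∈ S, ¬ a ≤ y := by
    by_contra h; push_neg at h
    exact hxy (hSlub.2 fun a haS => h a haS)
  obtain ⟨a, haS, hay⟩ := ha
  obtain ⟨hWne, hWdir, hWglb⟩ := hfilt y
  have hb : ∃ b, wayBelow y b ∧ ¬ a ≤ b := by
    by_contra h; push_neg at h
    exact hay (hWglb.2 fun b hb => h b hb)
  obtain ⟨b, hyb, hab⟩ := hb
  obtain ⟨t, ht⟩ := (hfilt x).1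
  obtain ⟨S', -, hS'ne, -, hS'wb, -⟩ := hcont y
  obtain ⟨c, hcS'⟩ := hS'ne
  refine ⟨{u | wayBelow a u ∧ wayBelow u t}, {v | wayBelow c v ∧ wayBelow v b},
    TopologicalSpace.GenerateOpen.basic _ ⟨a, t, rfl⟩,
    TopologicalSpace.GenerateOpen.basic _ ⟨c, b, rfl⟩,
    ⟨hSwb a haS, ht⟩, ⟨hS'wb c hcS', hyb⟩, ?_⟩
  rintro u ⟨hau, -⟩ v ⟨-, hvb⟩ huv
  exact hab ((wayBelow_le hau).trans (huv.trans (wayBelow_le hvb)))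

/-- In a separable globally hyperbolic poset, a Vietoris limit of nonempty
compact linearly ordered subsets is linearly ordered. -/
theorem limit_chain (hX : IsGloballyHyperbolic X) (hsep : SeparablePoset X)
    (ki : ℕ → NEC X) (hki : ∀ i, IsChain (· ≤ ·) (ki i).1) (k : NEC X)
    (hconv : Filter.Tendsto ki Filter.atTop (@nhds (NEC X) (vietoris X) k)) :
    IsChain (· ≤ ·) k.1 := by
  letI : TopologicalSpace X := intervalTop X
  letI : TopologicalSpace (NEC X) := vietoris X
  intro p hp q hq hne
  by_contra h
  push_neg at h
  obtain ⟨hpq, hqp⟩ := h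
  obtain ⟨U1, V1, hU1o, hV1o, hpU1, hqV1, h1⟩ := sep_of_not_le hX.1 hpq
  obtain ⟨U2, V2, hU2o, hV2o, hqU2, hpV2, h2⟩ := sep_of_not_le hX.1 hqp
  set A := U1 ∩ V2 with hA
  set B := V1 ∩ U2 with hB
  have hAo : @IsOpen X (intervalTop X) A := hU1o.inter hV2o
  have hBo : @IsOpen X (intervalTop X) B := hV1o.inter hU2o
  set W : Fin 3 → Set X := ![A, B, Set.univ] with hW
  set s : Set (NEC X) :=
    {K : NEC X | K.1 ⊆ ⋃ i, W i ∧ ∀ i, (K.1 ∩ W i).Nonempty} with hs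
  have hso : @IsOpen (NEC X) (vietoris X) s :=
    TopologicalSpace.GenerateOpen.basic _ ⟨3, W, by
      intro i
      fin_cases i
      · exact hAo
      · exact hBo
      · exact isOpen_univ, rfl⟩
  have hks : k ∈ s := by
    refine ⟨fun z _ => Set.mem_iUnion.2 ⟨2, by simp [hW]⟩, ?_⟩
    intro i
    fin_cases i
    · exact ⟨p, hp, hpU1, hpV2⟩
    · exact ⟨q, hq, hqV1, hqU2⟩
    · exact ⟨p, hp, trivial⟩
  have hmem : s ∈ @nhds (NEC X) (vietoris X) k := hso.mem_nhds hks
  have hev : ∀ᶠ i in Filter.atTop, ki i ∈ s := hconv hmem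
  obtain ⟨i, hi⟩ := hev.exists
  obtain ⟨u, huk, huU1, huV2⟩ := hi.2 0
  obtain ⟨v, hvk, hvV1, hvU2⟩ := hi.2 1
  have huv : u ≠ v := by
    rintro rfl
    exact h1 u huU1 u hvV1 le_rfl
  rcases hki i huk hvk huv with hle | hle
  · exact h1 u huU1 v hvV1 hle
  · exact h2 v hvU2 u huV2 hle
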